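/- Let q ≥ 1 and p ≥ 2 be reals, let ℓ ≥ 1 be an integer, and let L : ℕ → ℕ be a finitely supported function with total mass N = ∑_{n≥1} n·L_n ≥ 1. Then (1/(2N²))·∑_{m≥1} ∑_{n≥1} (m^q + n^q)·L_m·(L_n − 1[m=n])·[ (m+n)^p·1[m+n ≥ ℓ+1] − m^p·1[m ≥ ℓ+1] − n^p·1[n ≥ ℓ+1] ] ≥ p·( (1/N)·∑_{n≥ℓ} n^{p+q−1}·L_n )·( (1/N)·∑_{m=1}^{ℓ−1} m·L_m ). -/

import Mathlib

/-!
Only pairs made of one large particle (size `m ≥ ℓ`) and one small particle (size `n < ℓ`) are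
kept; every other term of the generator is nonnegative, since `x ↦ x ^ p` is superadditive for
`p ≥ 1`. Such a pair always merges to size at least `ℓ + 1`, so its increment is at least
`(m + n) ^ p - m ^ p ≥ p m ^ (p - 1) n` by convexity, and its rate is at least `m ^ q L_m L_n`.
Each such pair is counted twice in the symmetric double sum, which cancels the factor `1 / 2`.
-/

/-- Total mass `N = ∑_{n ≥ 1} n · L_n` of a particle configuration `L`. -/
noncomputable def totalMass (L : ℕ → ℕ) : ℝ :=
  ∑' n : ℕ, (n : ℝ) * (L n : ℝ)

/-- `Δ^p_K(m,n) = (m+n)^p·1[m+n ≥ K] − m^p·1[m ≥ K] − n^p·1[n ≥ K]`, the change of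
the test function `ψ(j) = j^p·1[j ≥ K]` when particles of sizes `m` and `n` merge. -/
noncomputable def deltaPow (p : ℝ) (K m n : ℕ) : ℝ :=
  (if K ≤ m + n then ((m : ℝ) + (n : ℝ)) ^ p else 0)
    - (if K ≤ m then (m : ℝ) ^ p else 0) - (if K ≤ n then (n : ℝ) ^ p else 0)

open Finset

theorem tsum_tsum_eq_sum_sum {α β γ : Type*} [AddCommMonoid α] [TopologicalSpace α]
    {f : β → γ → α} (s : Finset β) (t : Finset γ) (hf : ∀ m n, f m n ≠ 0 → m ∈ s ∧ n ∈ t) :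
    ∑' m, ∑' n, f m n = ∑ m ∈ s, ∑ n ∈ t, f m n := by
  have inner (m : β) : ∑' n, f m n = ∑ n ∈ t, f m n :=
    tsum_eq_sum fun n hn ↦ by_contra fun h ↦ hn (hf m n h).2
  rw [tsum_congr inner]
  refine tsum_eq_sum fun m hm ↦ sum_eq_zero fun n _ ↦ by_contra fun h ↦ hm (hf m n h).1

theorem tsum_nat_add_eq_tsum {α : Type*} [AddCommMonoid α] [TopologicalSpace α]
    {f : ℕ → α} {k : ℕ} (hf : ∀ n < k, f n = 0) : ∑' n, f (n + k) = ∑' n, f n :=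
  (add_left_injective k).tsum_eq fun n hn ↦
    ⟨n - k, Nat.sub_add_cancel (not_lt.1 fun h ↦ hn (hf n h))⟩

namespace Real

theorem rpow_add_mul_rpow_sub_one_mul_le {p x y : ℝ} (hp : 1 ≤ p) (hx : 0 < x) (hy : 0 ≤ y) :
    x ^ p + p * x ^ (p - 1) * y ≤ (x + y) ^ p := by
  have bernoulli := one_add_mul_self_le_rpow_one_add
    (le_trans (by norm_num) (div_nonneg hy hx.le) : (-1 : ℝ) ≤ y / x) hp
  calc x ^ p + p * x ^ (p - 1) * y = x ^ p * (1 + p * (y / x)) := by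
        rw [rpow_sub_one hx.ne']; field_simp
    _ ≤ x ^ p * (1 + y / x) ^ p := by gcongr
    _ = (x + y) ^ p := by
        rw [← mul_rpow hx.le (by positivity), mul_add, mul_one, mul_div_cancel₀ _ hx.ne']

end Real

section deltaPow

variable {p : ℝ} {K m n : ℕ}

theorem deltaPow_comm (p : ℝ) (K m n : ℕ) : deltaPow p K m n = deltaPow p K n m := by
  unfold deltaPow
  rw [Nat.add_comm, add_comm (n : ℝ)]
  ring

theorem deltaPow_zero_right (p : ℝ) (hK : K ≠ 0) (m : ℕ) : deltaPow p K m 0 = 0 := by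
  simp [deltaPow, Nat.pos_of_ne_zero hK |>.not_ge]

theorem deltaPow_zero_left (p : ℝ) (hK : K ≠ 0) (n : ℕ) : deltaPow p K 0 n = 0 := by
  rw [deltaPow_comm, deltaPow_zero_right p hK]

theorem deltaPow_nonneg (hp : 1 ≤ p) (K m n : ℕ) : 0 ≤ deltaPow p K m n := by
  have hm : (0 : ℝ) ≤ m := m.cast_nonneg
  have hn : (0 : ℝ) ≤ n := n.cast_nonneg
  have superadd := Real.add_rpow_le_rpow_add hm hn hp
  have mono_m : (m : ℝ) ^ p ≤ (m + n) ^ p := by gcongr; linarith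
  have mono_n : (n : ℝ) ^ p ≤ (m + n) ^ p := by gcongr; linarith
  have := Real.rpow_nonneg hm p
  have := Real.rpow_nonneg hn p
  unfold deltaPow
  split_ifs <;> first | omega | linarith

/-- A small particle (size `n < ℓ`) merging with a large one (size `m ≥ ℓ`) always lands at or
above the threshold `ℓ + 1`, so the tangent line of `x ↦ x ^ p` at `m` bounds the increment. -/
theorem mul_rpow_sub_one_mul_le_deltaPow (hp : 1 ≤ p) {ℓ : ℕ} (hm : ℓ ≤ m) (hn : 0 < n)
    (hnℓ : n < ℓ) : p * (m : ℝ) ^ (p - 1) * n ≤ deltaPow p (ℓ + 1) m n := by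
  have tangent := Real.rpow_add_mul_rpow_sub_one_mul_le hp
    (by exact_mod_cast (hn.trans_le (hnℓ.le.trans hm)) : (0 : ℝ) < m) n.cast_nonneg
  have := Real.rpow_nonneg m.cast_nonneg p
  unfold deltaPow
  rw [if_pos (by omega), if_neg (by omega : ¬ℓ + 1 ≤ n)]
  split_ifs <;> linarith

end deltaPow

noncomputable def generatorTerm (q p : ℝ) (K : ℕ) (L : ℕ → ℕ) (m n : ℕ) : ℝ :=
  ((m : ℝ) ^ q + (n : ℝ) ^ q) * (L m : ℝ) * ((L n : ℝ) - if m = n then 1 else 0)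
    * deltaPow p K m n

section generatorTerm

variable {q p : ℝ} {K : ℕ} {L : ℕ → ℕ} {m n : ℕ}

theorem generatorTerm_comm (q p : ℝ) (K : ℕ) (L : ℕ → ℕ) (m n : ℕ) :
    generatorTerm q p K L m n = generatorTerm q p K L n m := by
  rcases eq_or_ne m n with rfl | hmn
  · rfl
  · simp only [generatorTerm, if_neg hmn, if_neg hmn.symm, deltaPow_comm p K m]
    ring

theorem generatorTerm_eq_zero_of_left (h : L m = 0) : generatorTerm q p K L m n = 0 := by
  simp [generatorTerm, h]

theorem generatorTerm_eq_zero_of_right (h : L n = 0) : generatorTerm q p K L m n = 0 := by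
  rw [generatorTerm_comm, generatorTerm_eq_zero_of_left h]

theorem generatorTerm_zero_left (hK : K ≠ 0) : generatorTerm q p K L 0 n = 0 := by
  simp [generatorTerm, deltaPow_zero_left p hK]

theorem generatorTerm_zero_right (hK : K ≠ 0) : generatorTerm q p K L m 0 = 0 := by
  rw [generatorTerm_comm, generatorTerm_zero_left hK]

/-- `L m * (L n - [m = n])` counts ordered pairs of distinct particles of sizes `m` and `n`. -/
theorem natCast_mul_sub_ite_nonneg (L : ℕ → ℕ) (m n : ℕ) :
    0 ≤ (L m : ℝ) * ((L n : ℝ) - if m = n then 1 else 0) := by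
  rcases eq_or_ne m n with rfl | hmn
  · rw [if_pos rfl]
    rcases (L m).eq_zero_or_pos with h | h
    · simp [h]
    · have : (1 : ℝ) ≤ L m := by exact_mod_cast h
      nlinarith
  · simp only [if_neg hmn, sub_zero]
    positivity

theorem generatorTerm_nonneg (hp : 1 ≤ p) (q : ℝ) (K : ℕ) (L : ℕ → ℕ) (m n : ℕ) :
    0 ≤ generatorTerm q p K L m n := by
  unfold generatorTerm
  rw [mul_assoc _ (L m : ℝ)]
  have := natCast_mul_sub_ite_nonneg L m n
  have := deltaPow_nonneg hp K m n
  positivity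

theorem mul_le_generatorTerm (hp : 1 ≤ p) {ℓ : ℕ} (hm : ℓ ≤ m) (hn : 0 < n) (hnℓ : n < ℓ) :
    p * ((m : ℝ) ^ (p + q - 1) * L m) * (n * L n) ≤ generatorTerm q p (ℓ + 1) L m n := by
  have hm0 : (0 : ℝ) < m := by exact_mod_cast hn.trans_le (hnℓ.le.trans hm)
  have hΔ := mul_rpow_sub_one_mul_le_deltaPow hp hm hn hnℓ
  have hweight : 0 ≤ (m : ℝ) ^ q * L m * L n := by positivity
  have hkernel : 0 ≤ (n : ℝ) ^ q * L m * L n * deltaPow p (ℓ + 1) m n := by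
    have := deltaPow_nonneg hp (ℓ + 1) m n
    positivity
  rw [generatorTerm, if_neg (by omega), sub_zero]
  calc p * ((m : ℝ) ^ (p + q - 1) * L m) * (n * L n)
      = (m : ℝ) ^ q * L m * L n * (p * (m : ℝ) ^ (p - 1) * n) := by
        rw [show p + q - 1 = q + (p - 1) by ring, Real.rpow_add hm0]
        ring
    _ ≤ (m : ℝ) ^ q * L m * L n * deltaPow p (ℓ + 1) m n := by gcongr
    _ ≤ ((m : ℝ) ^ q + n ^ q) * L m * L n * deltaPow p (ℓ + 1) m n := by linarith

end generatorTerm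

noncomputable def largeWeight (r : ℝ) (ℓ : ℕ) (L : ℕ → ℕ) (m : ℕ) : ℝ :=
  if ℓ ≤ m then (m : ℝ) ^ r * L m else 0

noncomputable def smallMass (ℓ : ℕ) (L : ℕ → ℕ) (n : ℕ) : ℝ :=
  if n < ℓ then (n : ℝ) * L n else 0

section largeSmall

variable {q p : ℝ} {ℓ : ℕ} {L : ℕ → ℕ}

theorem mul_largeWeight_smallMass_le_generatorTerm (hp : 1 ≤ p) (m n : ℕ) :
    p * largeWeight (p + q - 1) ℓ L m * smallMass ℓ L n ≤ generatorTerm q p (ℓ + 1) L m n := by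
  by_cases h : ℓ ≤ m ∧ 0 < n ∧ n < ℓ
  · obtain ⟨hm, hn, hnℓ⟩ := h
    simpa only [largeWeight, smallMass, if_pos hm, if_pos hnℓ] using
      mul_le_generatorTerm hp hm hn hnℓ
  · have : largeWeight (p + q - 1) ℓ L m * smallMass ℓ L n = 0 := by
      rcases n.eq_zero_or_pos with rfl | hn
      · simp [smallMass]
      · simp only [largeWeight, smallMass]
        split_ifs <;> simp_all
    rw [mul_assoc, this, mul_zero]
    exact generatorTerm_nonneg hp q (ℓ + 1) L m n

/-- Only one of the two ordered pairs `(m, n)`, `(n, m)` can be (large, small). -/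
theorem add_mul_largeWeight_smallMass_le_generatorTerm (hp : 1 ≤ p) (m n : ℕ) :
    p * largeWeight (p + q - 1) ℓ L m * smallMass ℓ L n
        + p * largeWeight (p + q - 1) ℓ L n * smallMass ℓ L m
      ≤ generatorTerm q p (ℓ + 1) L m n := by
  by_cases hm : ℓ ≤ m
  · have : smallMass ℓ L m = 0 := if_neg (not_lt.2 hm)
    simpa [this] using mul_largeWeight_smallMass_le_generatorTerm hp m n
  · have : largeWeight (p + q - 1) ℓ L m = 0 := if_neg hm
    simpa [this, generatorTerm_comm q p _ L m] using
      mul_largeWeight_smallMass_le_generatorTerm hp n m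

theorem two_mul_sum_largeWeight_mul_sum_smallMass_le (hp : 1 ≤ p) (s : Finset ℕ) :
    2 * (p * (∑ m ∈ s, largeWeight (p + q - 1) ℓ L m) * ∑ n ∈ s, smallMass ℓ L n)
      ≤ ∑ m ∈ s, ∑ n ∈ s, generatorTerm q p (ℓ + 1) L m n := by
  calc 2 * (p * (∑ m ∈ s, largeWeight (p + q - 1) ℓ L m) * ∑ n ∈ s, smallMass ℓ L n)
      = ∑ m ∈ s, ∑ n ∈ s, (p * largeWeight (p + q - 1) ℓ L m * smallMass ℓ L n
          + p * largeWeight (p + q - 1) ℓ L n * smallMass ℓ L m) := by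
        simp only [sum_add_distrib, ← mul_sum, ← sum_mul]
        ring
    _ ≤ ∑ m ∈ s, ∑ n ∈ s, generatorTerm q p (ℓ + 1) L m n :=
        sum_le_sum fun m _ ↦ sum_le_sum fun n _ ↦
          add_mul_largeWeight_smallMass_le_generatorTerm hp m n

end largeSmall

section finiteSupport

variable {q p : ℝ} {ℓ K : ℕ} {L : ℕ → ℕ} {s : Finset ℕ}

theorem tsum_eq_sum_largeWeight (r : ℝ) (hs : ∀ m ∉ s, L m = 0) :
    ∑' n : ℕ, ((n : ℝ) + ℓ) ^ r * L (n + ℓ) = ∑ m ∈ s, largeWeight r ℓ L m := by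
  calc ∑' n : ℕ, ((n : ℝ) + ℓ) ^ r * L (n + ℓ) = ∑' n, largeWeight r ℓ L (n + ℓ) := by
        simp [largeWeight]
    _ = ∑' m, largeWeight r ℓ L m := tsum_nat_add_eq_tsum fun m hm ↦ if_neg (not_le.2 hm)
    _ = ∑ m ∈ s, largeWeight r ℓ L m := tsum_eq_sum fun m hm ↦ by simp [largeWeight, hs m hm]

theorem sum_Ico_eq_sum_smallMass (hs : ∀ m ∉ s, L m = 0) :
    ∑ m ∈ Ico 1 ℓ, (m : ℝ) * L m = ∑ n ∈ s, smallMass ℓ L n := by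
  calc ∑ m ∈ Ico 1 ℓ, (m : ℝ) * L m = ∑ n ∈ Ico 1 ℓ, smallMass ℓ L n :=
        sum_congr rfl fun n hn ↦ (if_pos (mem_Ico.1 hn).2).symm
    _ = ∑' n, smallMass ℓ L n := by
        refine (tsum_eq_sum fun n hn ↦ ?_).symm
        rcases n.eq_zero_or_pos with rfl | hn0
        · simp [smallMass]
        · exact if_neg fun h ↦ hn (mem_Ico.2 ⟨hn0, h⟩)
    _ = ∑ n ∈ s, smallMass ℓ L n := tsum_eq_sum fun n hn ↦ by simp [smallMass, hs n hn]

theorem tsum_tsum_eq_sum_sum_generatorTerm (hK : K ≠ 0) (hs : ∀ m ∉ s, L m = 0) :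
    ∑' (m : ℕ) (n : ℕ), (((m : ℝ) + 1) ^ q + ((n : ℝ) + 1) ^ q) * (L (m + 1) : ℝ)
        * ((L (n + 1) : ℝ) - if m = n then 1 else 0) * deltaPow p K (m + 1) (n + 1)
      = ∑ m ∈ s, ∑ n ∈ s, generatorTerm q p K L m n := by
  have shift (f : ℕ → ℝ) (hf : f 0 = 0) : ∑' n, f (n + 1) = ∑' n, f n :=
    tsum_nat_add_eq_tsum fun n hn ↦ by rwa [Nat.lt_one_iff.1 hn]
  calc _ = ∑' (m : ℕ) (n : ℕ), generatorTerm q p K L (m + 1) (n + 1) := by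
        simp [generatorTerm]
    _ = ∑' (m : ℕ) (n : ℕ), generatorTerm q p K L (m + 1) n :=
        tsum_congr fun m ↦ shift _ (generatorTerm_zero_right hK)
    _ = ∑' (m : ℕ) (n : ℕ), generatorTerm q p K L m n :=
        shift (fun m ↦ ∑' n, generatorTerm q p K L m n) (by simp [generatorTerm_zero_left hK])
    _ = ∑ m ∈ s, ∑ n ∈ s, generatorTerm q p K L m n := by
        refine tsum_tsum_eq_sum_sum s s fun m n h ↦ ⟨?_, ?_⟩ <;> by_contra hmem
        · exact h (generatorTerm_eq_zero_of_left (hs m hmem))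
        · exact h (generatorTerm_eq_zero_of_right (hs n hmem))

end finiteSupport

theorem generator_moment_lower_bound_general
    (q p : ℝ) (hp : 2 ≤ p) (ℓ : ℕ)
    (L : ℕ → ℕ) (hLfin : (Function.support L).Finite) :
    p * ((totalMass L)⁻¹ * ∑' n : ℕ, ((n : ℝ) + (ℓ : ℝ)) ^ (p + q - 1) * (L (n + ℓ) : ℝ))
        * ((totalMass L)⁻¹ * ∑ m ∈ Finset.Ico 1 ℓ, (m : ℝ) * (L m : ℝ))
      ≤ (1 / (2 * totalMass L ^ 2)) *
          ∑' (m : ℕ) (n : ℕ),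
            (((m : ℝ) + 1) ^ q + ((n : ℝ) + 1) ^ q) * (L (m + 1) : ℝ)
              * ((L (n + 1) : ℝ) - if m = n then 1 else 0)
              * deltaPow p (ℓ + 1) (m + 1) (n + 1) := by
  obtain ⟨s, hs⟩ : ∃ s : Finset ℕ, ∀ m ∉ s, L m = 0 :=
    ⟨hLfin.toFinset, fun m hm ↦ by simpa using hm⟩
  rw [tsum_eq_sum_largeWeight _ hs, sum_Ico_eq_sum_smallMass hs,
    tsum_tsum_eq_sum_sum_generatorTerm ℓ.succ_ne_zero hs]
  calc _ = 1 / (2 * totalMass L ^ 2)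
        * (2 * (p * (∑ m ∈ s, largeWeight (p + q - 1) ℓ L m) * ∑ n ∈ s, smallMass ℓ L n)) := by
        ring
    _ ≤ _ := by
      gcongr
      exact two_mul_sum_largeWeight_mul_sum_smallMass_le (by linarith) s

/-- Generator lower bound for the truncated `p`-th moment with kernel `m^q + n^q`:
the action of the Marcus–Lushnikov generator on `M_{p,ℓ+1}` is at least
`p · ((1/N) ∑_{n ≥ ℓ} n^{p+q−1} L_n) · ((1/N) ∑_{m=1}^{ℓ−1} m L_m)`. -/
theorem generator_moment_lower_bound
    (q p : ℝ) (hq : 1 ≤ q) (hp : 2 ≤ p) (ℓ : ℕ) (hℓ : 1 ≤ ℓ)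
    (L : ℕ → ℕ) (hLfin : (Function.support L).Finite)
    (hN : 1 ≤ totalMass L) :
    p * ((totalMass L)⁻¹ * ∑' n : ℕ, ((n : ℝ) + (ℓ : ℝ)) ^ (p + q - 1) * (L (n + ℓ) : ℝ))
        * ((totalMass L)⁻¹ * ∑ m ∈ Finset.Ico 1 ℓ, (m : ℝ) * (L m : ℝ))
      ≤ (1 / (2 * totalMass L ^ 2)) *
          ∑' (m : ℕ) (n : ℕ),
            (((m : ℝ) + 1) ^ q + ((n : ℝ) + 1) ^ q) * (L (m + 1) : ℝ)
              * ((L (n + 1) : ℝ) - if m = n then 1 else 0)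
              * deltaPow p (ℓ + 1) (m + 1) (n + 1) :=
  generator_moment_lower_bound_general q p hp ℓ L hLfin
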